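/- For the type inclusion preorder ≤ on intersection types with records, for any label a, the type ⟨a:ω⟩ is not equivalent to ω; specifically ω ≤ ⟨a:ω⟩ does not hold. -/
import Mathlib


/-- Intersection types with record types: σ,τ ::= α | t | ω | σ→τ | σ∩τ | ⟨a:σ⟩. -/
inductive Ty : Type
  | tvar : ℕ → Ty
  | tconst : ℕ → Ty
  | omega : Ty
  | arrow : Ty → Ty → Ty
  | inter : Ty → Ty → Ty
  | rcd : ℕ → Ty → Ty

/-- The type-inclusion preorder (BCD extended with record axioms). -/
inductive Subt : Ty → Ty → Prop
  | refl (σ) : Subt σ σ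
  | trans {σ τ ρ} : Subt σ τ → Subt τ ρ → Subt σ ρ
  | top (σ) : Subt σ .omega
  | omegaArrow : Subt .omega (.arrow .omega .omega)
  | interLeft (σ τ) : Subt (.inter σ τ) σ
  | interRight (σ τ) : Subt (.inter σ τ) τ
  | arrowInter (σ τ₁ τ₂) : Subt (.inter (.arrow σ τ₁) (.arrow σ τ₂)) (.arrow σ (.inter τ₁ τ₂))
  | interGlb {σ τ₁ τ₂} : Subt σ τ₁ → Subt σ τ₂ → Subt σ (.inter τ₁ τ₂)
  | arrowMono {σ₁ σ₂ τ₁ τ₂} : Subt σ₂ σ₁ → Subt τ₁ τ₂ → Subt (.arrow σ₁ τ₁) (.arrow σ₂ τ₂)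
  | rcdMono {a σ τ} : Subt σ τ → Subt (.rcd a σ) (.rcd a τ)
  | rcdInter (a σ τ) : Subt (.inter (.rcd a σ) (.rcd a τ)) (.rcd a (.inter σ τ))

/-- A finite intersection ⋂ᵢ ⟨aᵢ:σᵢ⟩ of record types (ω for the empty list). -/
def recTy : List (ℕ × Ty) → Ty
  | [] => .omega
  | [(a, σ)] => .rcd a σ
  | (a, σ) :: t => .inter (.rcd a σ) (recTy t)


/-- No record type appears among the top-level intersection components. -/
def noRcd : Ty → Prop
  | .rcd _ _ => False
  | .inter σ τ => noRcd σ ∧ noRcd τ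
  | _ => True

lemma noRcd_mono {σ τ : Ty} (h : Subt σ τ) : noRcd σ → noRcd τ := by
  induction h with
  | refl => exact id
  | trans _ _ ih1 ih2 => exact fun h => ih2 (ih1 h)
  | top => exact fun _ => trivial
  | omegaArrow => exact fun _ => trivial
  | interLeft => exact fun h => h.1
  | interRight => exact fun h => h.2
  | arrowInter => exact fun _ => trivial
  | interGlb _ _ ih1 ih2 => exact fun h => ⟨ih1 h, ih2 h⟩
  | arrowMono => exact fun _ => trivial
  | rcdMono => exact fun h => h.elim
  | rcdInter => exact fun h => h.1.elim

/-- ⟨a:ω⟩ is not equivalent to ω; specifically ω ≤ ⟨a:ω⟩ fails. -/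
theorem record_omega_not_omega (a : ℕ) :
    ¬ Subt Ty.omega (Ty.rcd a Ty.omega) ∧
    ¬ (Subt (Ty.rcd a Ty.omega) Ty.omega ∧ Subt Ty.omega (Ty.rcd a Ty.omega)) := by
  have h : ¬ Subt Ty.omega (Ty.rcd a Ty.omega) := fun h => noRcd_mono h trivial
  exact ⟨h, fun hc => h hc.2⟩
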